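/- Let G be a finite abelian group of order u² containing 2m² building blocks ⊤(x,y) and ⊥(x,y), x,y ∈ Z_m, satisfying conditions (1), (2), (3) and (5). Then for every non-principal character ψ of G, ψ(T_{y₁,y₂}) equals either (δ−u)/m or (δ+(m−1)u)/m, where δ = 1 if y₁≠0 and y₂≠0, δ = 1−2m if y₁=y₂=0, and δ = 1−m otherwise. Hence each T_{y₁,y₂} is a partial difference set in G. -/

import Mathlib

open scoped Classical

noncomputable section

/-- Indicator function of a finset, with values in `ℤ`. -/
def ind {α : Type*} (D : Finset α) (g : α) : ℤ := if g ∈ D then 1 else 0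

/-- Character sum `ψ(D) = ∑_{x ∈ D} ψ(x)`. -/
def charSum {G : Type*} [AddCommGroup G] (ψ : AddChar G ℂ) (D : Finset G) : ℂ :=
  ∑ g ∈ D, ψ g

/-- Condition (1): cardinalities of the building blocks. -/
def Cond1 {G : Type*} (m u : ℕ) (T B : ZMod m → ZMod m → Finset G) : Prop :=
  ∀ x y : ZMod m,
    (y ≠ 0 → ((T x y).card : ℚ) = ((u : ℚ) ^ 2 - u) / m ∧
             ((B x y).card : ℚ) = ((u : ℚ) ^ 2 - u) / m) ∧
    (y = 0 → ((T x y).card : ℚ) = ((u : ℚ) ^ 2 - u) / m + u ∧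
             ((B x y).card : ℚ) = ((u : ℚ) ^ 2 - u) / m + u)

/-- Condition (2): for each family and each `x, y`, the translates
`♯(x−z, y+z)`, `z ∈ Z_m`, partition `G`. -/
def Cond2 {G : Type*} (m : ℕ) (T B : ZMod m → ZMod m → Finset G) : Prop :=
  ∀ x y : ZMod m, ∀ g : G,
    (∃! z : ZMod m, g ∈ T (x - z) (y + z)) ∧ (∃! z : ZMod m, g ∈ B (x - z) (y + z))

/-- Condition (3): the character value condition. The boolean in the triple selects
the family (`true` for `⊤`, `false` for `⊥`). -/
def Cond3 {G : Type*} [AddCommGroup G] (m u : ℕ) (T B : ZMod m → ZMod m → Finset G) : Prop :=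
  ∀ ψ : AddChar G ℂ, ψ ≠ 1 →
    ∃! t : ZMod m × ZMod m × Bool,
      (∀ y : ZMod m, y ≠ t.2.1 → charSum ψ ((cond t.2.2 T B) t.1 y) = -(u : ℂ)) ∧
      (∀ x : ZMod m, x ≠ t.1 → charSum ψ ((cond t.2.2 T B) x t.2.1) = (u : ℂ)) ∧
      (∀ x y : ZMod m, (x = t.1 ↔ y = t.2.1) → charSum ψ ((cond t.2.2 T B) x y) = 0) ∧
      (∀ x y : ZMod m, charSum ψ ((cond (!t.2.2) T B) x y) = 0)

/-- `S` is the set `S_x` from condition (4): `0 ∉ S` and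
`∑_{y}(⊤(x,y)+⊥(x,y)) = m·S + G + [0_G]` in the group ring `ℤ[G]`
(stated coefficientwise). -/
def IsSFor {G : Type*} [AddCommGroup G] [Fintype G] (m : ℕ) [NeZero m]
    (T B : ZMod m → ZMod m → Finset G) (x : ZMod m) (S : Finset G) : Prop :=
  (0 : G) ∉ S ∧ ∀ g : G,
    (∑ y : ZMod m, (ind (T x y) g + ind (B x y) g)) =
      m * ind S g + 1 + (if g = 0 then 1 else 0)

/-- Condition (4). -/
def Cond4 {G : Type*} [AddCommGroup G] [Fintype G] (m : ℕ) [NeZero m]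
    (T B : ZMod m → ZMod m → Finset G) : Prop :=
  ∀ x : ZMod m, ∃ S : Finset G, IsSFor m T B x S

/-- `Tset` is the set `T_{y₁,y₂}` from condition (5): `0 ∉ Tset` and
`∑_{x}(⊤(x,y₁)+⊥(x,y₂)) = m·Tset + G + δ'·[0_G]` in `ℤ[G]`, where `δ' = −1` if
`y₁ ≠ 0 ≠ y₂`, `δ' = 2m−1` if `y₁ = y₂ = 0`, and `δ' = m−1` otherwise. -/
def IsTFor {G : Type*} [AddCommGroup G] [Fintype G] (m : ℕ) [NeZero m]
    (T B : ZMod m → ZMod m → Finset G) (y₁ y₂ : ZMod m) (Tset : Finset G) : Prop :=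
  (0 : G) ∉ Tset ∧ ∀ g : G,
    (∑ x : ZMod m, (ind (T x y₁) g + ind (B x y₂) g)) =
      m * ind Tset g + 1 +
        (if y₁ ≠ 0 ∧ y₂ ≠ 0 then (-1 : ℤ)
         else if y₁ = 0 ∧ y₂ = 0 then 2 * (m : ℤ) - 1 else (m : ℤ) - 1) *
          (if g = 0 then 1 else 0)

/-- Condition (5). -/
def Cond5 {G : Type*} [AddCommGroup G] [Fintype G] (m : ℕ) [NeZero m]
    (T B : ZMod m → ZMod m → Finset G) : Prop :=
  ∀ y₁ y₂ : ZMod m, ∃ Tset : Finset G, IsTFor m T B y₁ y₂ Tset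


/-!
Apply a non-principal character `ψ` to condition (5): `m ψ(T) - δ = Σ_x (ψ(⊤(x,y₁)) + ψ(⊥(x,y₂)))`.
By condition (3) only one family contributes, and its character values form a cross centred
at `(x', y')`, so the column sum is `(m - 1) u` if the column is `y'` and `-u` otherwise.
The two resulting values of `ψ(T)` are real, so by Fourier inversion `T = -T`. Finally, a
symmetric set `D ∌ 0` with only two non-principal character values `a, b` is a partial difference
set: `(ψ(D) - a)(ψ(D) - b)` vanishes off the principal character, and inverting it shows that the
number of ways to write `g` as a difference of two elements of `D` depends only on whether `g ∈ D`.
-/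

section CharacterSums

variable {G : Type*} [AddCommGroup G] [Fintype G]

lemma charSum_eq_sum_ind (ψ : AddChar G ℂ) (D : Finset G) :
    charSum ψ D = ∑ g, (ind D g : ℂ) * ψ g := by
  simp only [charSum, ind, Int.cast_ite, Int.cast_one, Int.cast_zero, ite_mul, one_mul,
    zero_mul, Finset.sum_ite_mem, Finset.univ_inter]

lemma sum_charSum_mul_apply_neg (D : Finset G) (g : G) :
    ∑ ψ : AddChar G ℂ, charSum ψ D * ψ (-g) = Fintype.card G * if g ∈ D then 1 else 0 := by
  simp_rw [charSum, Finset.sum_mul, ← AddChar.map_add_eq_mul]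
  rw [Finset.sum_comm]
  simp_rw [AddChar.sum_apply_eq_ite, ← sub_eq_add_neg, sub_eq_zero]
  simp [Finset.sum_ite_eq']

lemma neg_mem_of_conj_charSum_eq {D : Finset G}
    (hD : ∀ ψ : AddChar G ℂ, starRingEnd ℂ (charSum ψ D) = charSum ψ D) {g : G} (hg : g ∈ D) :
    -g ∈ D := by
  have h := congrArg (starRingEnd ℂ) (sum_charSum_mul_apply_neg D (-g))
  simp only [map_sum, map_mul, hD, ← AddChar.map_neg_eq_conj, neg_neg, map_natCast,
    sum_charSum_mul_apply_neg D g, if_pos hg] at h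
  by_contra hng
  simp [hng, Fintype.card_ne_zero] at h

lemma sum_ind_mul_eq_of_eq {ψ : AddChar G ℂ} (hψ : ψ ≠ 1) {f : G → ℤ} {c d : ℤ} {S : Finset G}
    (hf : ∀ g, f g = c * ind S g + 1 + d * if g = 0 then 1 else 0) :
    ∑ g, (f g : ℂ) * ψ g = c * charSum ψ S + d := by
  have hsum : ∑ g, ψ g = 0 := AddChar.sum_eq_zero_iff_ne_zero.2 hψ
  simp_rw [hf, Int.cast_add, Int.cast_mul, Int.cast_one, add_mul, Finset.sum_add_distrib,
    mul_assoc, ← Finset.mul_sum, ← charSum_eq_sum_ind, one_mul, hsum]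
  simp

end CharacterSums

section BuildingBlocks

variable {G : Type*} [AddCommGroup G] {m u : ℕ} [NeZero m]

lemma sum_charSum_eq_of_cross {ψ : AddChar G ℂ} {F : ZMod m → ZMod m → Finset G} {x' y' : ZMod m}
    (hrow : ∀ y, y ≠ y' → charSum ψ (F x' y) = -(u : ℂ))
    (hcol : ∀ x, x ≠ x' → charSum ψ (F x y') = u)
    (hzero : ∀ x y, (x = x' ↔ y = y') → charSum ψ (F x y) = 0) (y : ZMod m) :
    ∑ x, charSum ψ (F x y) = if y = y' then ((m : ℂ) - 1) * u else -(u : ℂ) := by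
  split_ifs with hy
  · subst hy
    rw [← Finset.add_sum_erase _ _ (Finset.mem_univ x'), hzero x' y (by simp),
      Finset.sum_congr rfl fun x hx => hcol x (Finset.ne_of_mem_erase hx)]
    simp [Finset.card_erase_of_mem, ZMod.card, Nat.cast_pred (Nat.pos_of_neZero m)]
  · rw [Finset.sum_eq_single x' (fun x _ hx => hzero x y (by simp [hx, hy])) (by simp)]
    exact hrow y hy

lemma sum_charSum_blocks_eq_or {T B : ZMod m → ZMod m → Finset G} (h3 : Cond3 m u T B)
    {ψ : AddChar G ℂ} (hψ : ψ ≠ 1) (y₁ y₂ : ZMod m) :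
    ∑ x, (charSum ψ (T x y₁) + charSum ψ (B x y₂)) = -(u : ℂ) ∨
      ∑ x, (charSum ψ (T x y₁) + charSum ψ (B x y₂)) = ((m : ℂ) - 1) * u := by
  obtain ⟨⟨x', y', b⟩, ⟨hrow, hcol, hzero, hother⟩, -⟩ := h3 ψ hψ
  rw [Finset.sum_add_distrib]
  cases b with
  | true =>
    simp only [Bool.not_true, cond_true, cond_false] at hrow hcol hzero hother
    rw [sum_charSum_eq_of_cross hrow hcol hzero, Finset.sum_eq_zero fun x _ => hother x y₂]
    split_ifs <;> simp
  | false =>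
    simp only [Bool.not_false, cond_true, cond_false] at hrow hcol hzero hother
    rw [sum_charSum_eq_of_cross hrow hcol hzero, Finset.sum_eq_zero fun x _ => hother x y₁]
    split_ifs <;> simp

end BuildingBlocks

section TSets

variable {G : Type*} [AddCommGroup G] [Fintype G] {m u : ℕ} [NeZero m]
  {T B : ZMod m → ZMod m → Finset G} {y₁ y₂ : ZMod m} {Tset : Finset G}

lemma IsTFor.sum_charSum_blocks (hT : IsTFor m T B y₁ y₂ Tset) {ψ : AddChar G ℂ} (hψ : ψ ≠ 1) :
    ∑ x, (charSum ψ (T x y₁) + charSum ψ (B x y₂)) =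
      m * charSum ψ Tset - (if y₁ ≠ 0 ∧ y₂ ≠ 0 then (1 : ℂ)
        else if y₁ = 0 ∧ y₂ = 0 then 1 - 2 * (m : ℂ) else 1 - (m : ℂ)) := by
  have h := sum_ind_mul_eq_of_eq hψ hT.2
  push_cast [add_mul, Finset.sum_mul] at h
  rw [Finset.sum_comm] at h
  simp only [Finset.sum_add_distrib, ← charSum_eq_sum_ind] at h
  rw [Finset.sum_add_distrib, h]
  split_ifs <;> ring

lemma IsTFor.charSum_eq_or (hT : IsTFor m T B y₁ y₂ Tset) (h3 : Cond3 m u T B)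
    {ψ : AddChar G ℂ} (hψ : ψ ≠ 1) :
    charSum ψ Tset = ((if y₁ ≠ 0 ∧ y₂ ≠ 0 then (1 : ℂ)
        else if y₁ = 0 ∧ y₂ = 0 then 1 - 2 * (m : ℂ) else 1 - (m : ℂ)) - u) / m ∨
    charSum ψ Tset = ((if y₁ ≠ 0 ∧ y₂ ≠ 0 then (1 : ℂ)
        else if y₁ = 0 ∧ y₂ = 0 then 1 - 2 * (m : ℂ) else 1 - (m : ℂ)) +
          ((m : ℂ) - 1) * u) / m := by
  have hm : (m : ℂ) ≠ 0 := Nat.cast_ne_zero.2 (NeZero.ne m)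
  rw [eq_div_iff hm, eq_div_iff hm]
  rcases sum_charSum_blocks_eq_or h3 hψ y₁ y₂ with h | h <;> rw [hT.sum_charSum_blocks hψ] at h
  · left; linear_combination h
  · right; linear_combination h

lemma IsTFor.conj_charSum (hT : IsTFor m T B y₁ y₂ Tset) (h3 : Cond3 m u T B)
    (ψ : AddChar G ℂ) : starRingEnd ℂ (charSum ψ Tset) = charSum ψ Tset := by
  by_cases hψ : ψ = 1
  · simp [hψ, charSum]
  · rcases hT.charSum_eq_or h3 hψ with h | h <;> rw [h] <;> split_ifs <;> simp [map_div₀, map_ofNat]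

lemma IsTFor.neg_mem (hT : IsTFor m T B y₁ y₂ Tset) (h3 : Cond3 m u T B) {g : G}
    (hg : g ∈ Tset) : -g ∈ Tset :=
  neg_mem_of_conj_charSum_eq (hT.conj_charSum h3) hg

end TSets

section PartialDifferenceSets

variable {G : Type*} [AddCommGroup G] {D : Finset G}

def diffCount (D : Finset G) (g : G) : ℕ := (D.filter fun t => t + g ∈ D).card

lemma charSum_eq_sum_apply_neg (hD : ∀ g ∈ D, -g ∈ D) (ψ : AddChar G ℂ) :
    charSum ψ D = ∑ t ∈ D, ψ (-t) :=
  (Finset.sum_nbij' Neg.neg Neg.neg hD hD (fun t _ => neg_neg t) (fun t _ => neg_neg t)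
    fun _ _ => rfl).symm

lemma fromRel_sub_adj_iff (h0 : (0 : G) ∉ D) (hD : ∀ g ∈ D, -g ∈ D) {v w : G} :
    (SimpleGraph.fromRel fun x y : G => x - y ∈ D).Adj v w ↔ w - v ∈ D := by
  have hswap : v - w ∈ D ↔ w - v ∈ D :=
    ⟨fun h => neg_sub v w ▸ hD _ h, fun h => neg_sub w v ▸ hD _ h⟩
  rw [SimpleGraph.fromRel_adj, hswap, or_self, and_iff_right_iff_imp]
  rintro h rfl
  exact h0 (sub_self v ▸ h)

variable [Fintype G]

lemma sum_charSum_sq_mul_apply_neg (hD : ∀ g ∈ D, -g ∈ D) (g : G) :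
    ∑ ψ : AddChar G ℂ, charSum ψ D ^ 2 * ψ (-g) = Fintype.card G * diffCount D g := by
  calc ∑ ψ : AddChar G ℂ, charSum ψ D ^ 2 * ψ (-g)
      = ∑ t ∈ D, ∑ ψ : AddChar G ℂ, charSum ψ D * ψ (-(t + g)) := by
        rw [Finset.sum_comm]
        refine Finset.sum_congr rfl fun ψ _ => ?_
        rw [sq, mul_assoc]
        nth_rewrite 2 [charSum_eq_sum_apply_neg hD]
        rw [Finset.sum_mul, Finset.mul_sum]
        simp_rw [neg_add, AddChar.map_add_eq_mul]
    _ = ∑ t ∈ D, Fintype.card G * if t + g ∈ D then (1 : ℂ) else 0 := by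
        simp_rw [sum_charSum_mul_apply_neg]
    _ = Fintype.card G * diffCount D g := by
        rw [← Finset.mul_sum, Finset.sum_boole, diffCount]

lemma diffCount_eq_of_mem_iff (hD : ∀ g ∈ D, -g ∈ D) {a b : ℂ}
    (hab : ∀ ψ : AddChar G ℂ, ψ ≠ 1 → charSum ψ D = a ∨ charSum ψ D = b) {g g' : G}
    (hg : g ≠ 0) (hg' : g' ≠ 0) (hmem : g ∈ D ↔ g' ∈ D) : diffCount D g = diffCount D g' := by
  have hcard : (Fintype.card G : ℂ) ≠ 0 := Nat.cast_ne_zero.2 Fintype.card_ne_zero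
  have hinv : ∀ x : G, ∑ ψ : AddChar G ℂ, (charSum ψ D - a) * (charSum ψ D - b) * ψ (-x) =
      (D.card - a) * (D.card - b) := by
    intro x
    rw [Finset.sum_eq_single (1 : AddChar G ℂ)
      (fun ψ _ hψ => by rcases hab ψ hψ with h | h <;> simp [h]) (by simp)]
    simp [charSum]
  have key : ∀ x : G, x ≠ 0 → (Fintype.card G : ℂ) * diffCount D x =
      (a + b) * (Fintype.card G * if x ∈ D then 1 else 0) + (D.card - a) * (D.card - b) := by
    intro x hx
    have h := hinv x
    simp_rw [show ∀ ψ : AddChar G ℂ, (charSum ψ D - a) * (charSum ψ D - b) * ψ (-x) =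
        charSum ψ D ^ 2 * ψ (-x) - (a + b) * (charSum ψ D * ψ (-x)) + a * b * ψ (-x)
        from fun ψ => by ring] at h
    rw [Finset.sum_add_distrib, Finset.sum_sub_distrib, ← Finset.mul_sum, ← Finset.mul_sum,
      sum_charSum_sq_mul_apply_neg hD, sum_charSum_mul_apply_neg, AddChar.sum_apply_eq_ite,
      if_neg (neg_ne_zero.2 hx)] at h
    linear_combination h
  have h : (Fintype.card G : ℂ) * diffCount D g = Fintype.card G * diffCount D g' := by
    rw [key g hg, key g' hg']
    simp only [hmem]
  exact_mod_cast mul_left_cancel₀ hcard h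

theorem isSRGWith_fromRel_sub_of_charSum_eq_or (h0 : (0 : G) ∉ D) (hD : ∀ g ∈ D, -g ∈ D)
    {a b : ℂ} (hab : ∀ ψ : AddChar G ℂ, ψ ≠ 1 → charSum ψ D = a ∨ charSum ψ D = b) :
    ∃ k l μ : ℕ, (SimpleGraph.fromRel fun x y : G => x - y ∈ D).IsSRGWith
      (Fintype.card G) k l μ := by
  set Γ := SimpleGraph.fromRel fun x y : G => x - y ∈ D
  have hadj (v w : G) : Γ.Adj v w ↔ w - v ∈ D := fromRel_sub_adj_iff h0 hD
  have hne {g : G} (hg : g ∈ D) : g ≠ 0 := fun h => h0 (h ▸ hg)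
  obtain ⟨l, hl⟩ : ∃ l, ∀ g ∈ D, diffCount D g = l := by
    rcases D.eq_empty_or_nonempty with hD0 | ⟨g₀, hg₀⟩
    · exact ⟨0, by simp [hD0]⟩
    · exact ⟨diffCount D g₀, fun g hg =>
        diffCount_eq_of_mem_iff hD hab (hne hg) (hne hg₀) (iff_of_true hg hg₀)⟩
  obtain ⟨μ, hμ⟩ : ∃ μ, ∀ g, g ≠ 0 → g ∉ D → diffCount D g = μ := by
    by_cases h : ∃ g₀, g₀ ≠ 0 ∧ g₀ ∉ D
    · obtain ⟨g₀, hg₀, hg₀D⟩ := h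
      exact ⟨diffCount D g₀, fun g hg hgD =>
        diffCount_eq_of_mem_iff hD hab hg hg₀ (iff_of_false hgD hg₀D)⟩
    · exact ⟨0, fun g hg hgD => absurd ⟨g, hg, hgD⟩ h⟩
  have hcommon (v w : G) : Fintype.card (Γ.commonNeighbors v w) = diffCount D (w - v) := by
    rw [diffCount, ← Fintype.card_coe]
    refine Fintype.card_congr (Equiv.subtypeEquiv (Equiv.subRight w) fun c => ?_)
    simp [SimpleGraph.mem_commonNeighbors, hadj, and_comm]
  refine ⟨D.card, l, μ, rfl, fun v => ?_, fun v w hvw => ?_, fun v w hvw hnadj => ?_⟩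
  · rw [← SimpleGraph.card_neighborSet_eq_degree, ← Fintype.card_coe]
    refine Fintype.card_congr (Equiv.subtypeEquiv (Equiv.subRight v) fun w => ?_)
    rw [SimpleGraph.mem_neighborSet, hadj]
    rfl
  · exact (hcommon v w).trans (hl _ ((hadj v w).1 hvw))
  · exact (hcommon v w).trans
      (hμ _ (sub_ne_zero.2 (Ne.symm hvw)) fun h => hnadj ((hadj v w).2 h))

end PartialDifferenceSets

theorem stmt_11_general {G : Type*} [AddCommGroup G] [Fintype G] (m u : ℕ) [NeZero m]
    (T B : ZMod m → ZMod m → Finset G)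
    (h3 : Cond3 m u T B) :
    ∀ y₁ y₂ : ZMod m, ∀ Tset : Finset G, IsTFor m T B y₁ y₂ Tset →
      (∀ ψ : AddChar G ℂ, ψ ≠ 1 →
        charSum ψ Tset = ((if y₁ ≠ 0 ∧ y₂ ≠ 0 then (1 : ℂ)
            else if y₁ = 0 ∧ y₂ = 0 then 1 - 2 * (m : ℂ) else 1 - (m : ℂ)) - u) / m ∨
        charSum ψ Tset = ((if y₁ ≠ 0 ∧ y₂ ≠ 0 then (1 : ℂ)
            else if y₁ = 0 ∧ y₂ = 0 then 1 - 2 * (m : ℂ) else 1 - (m : ℂ)) +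
              ((m : ℂ) - 1) * u) / m) ∧
      (∀ g ∈ Tset, -g ∈ Tset) ∧
      (∃ k l μ : ℕ,
        (SimpleGraph.fromRel fun a b : G => a - b ∈ Tset).IsSRGWith
          (Fintype.card G) k l μ) := by
  intro y₁ y₂ Tset hT
  have hvalues := fun ψ (hψ : ψ ≠ 1) => hT.charSum_eq_or h3 hψ
  have hsymm : ∀ g ∈ Tset, -g ∈ Tset := fun _ => hT.neg_mem h3
  exact ⟨hvalues, hsymm, isSRGWith_fromRel_sub_of_charSum_eq_or hT.1 hsymm hvalues⟩

theorem stmt_11 {G : Type*} [AddCommGroup G] [Fintype G] (m u : ℕ) [NeZero m]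
    (hu : Fintype.card G = u ^ 2)
    (T B : ZMod m → ZMod m → Finset G)
    (h1 : Cond1 m u T B) (h2 : Cond2 m T B) (h3 : Cond3 m u T B) (h5 : Cond5 m T B) :
    ∀ y₁ y₂ : ZMod m, ∀ Tset : Finset G, IsTFor m T B y₁ y₂ Tset →
      (∀ ψ : AddChar G ℂ, ψ ≠ 1 →
        charSum ψ Tset = ((if y₁ ≠ 0 ∧ y₂ ≠ 0 then (1 : ℂ)
            else if y₁ = 0 ∧ y₂ = 0 then 1 - 2 * (m : ℂ) else 1 - (m : ℂ)) - u) / m ∨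
        charSum ψ Tset = ((if y₁ ≠ 0 ∧ y₂ ≠ 0 then (1 : ℂ)
            else if y₁ = 0 ∧ y₂ = 0 then 1 - 2 * (m : ℂ) else 1 - (m : ℂ)) +
              ((m : ℂ) - 1) * u) / m) ∧
      (∀ g ∈ Tset, -g ∈ Tset) ∧
      (∃ k l μ : ℕ,
        (SimpleGraph.fromRel fun a b : G => a - b ∈ Tset).IsSRGWith
          (Fintype.card G) k l μ) :=
  stmt_11_general m u T B h3
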